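/- Let X be a resolving subcategory of K^{[-1,0]}(proj Λ). Then β(X) (defined as above) is a thick subcategory of K^{[-1,0]}(proj Λ): it is closed under direct summands, extensions, cones, and cocones of conflations. -/

import Mathlib

/-! **Statement 10.**  `K^{[-1,0]}(proj Λ)` is realized concretely as the full subcategory of
the homotopy category of cochain complexes of `Λ`-modules consisting of objects isomorphic to
complexes of finitely generated projective modules concentrated in degrees `-1, 0`; its
conflations are the distinguished triangles all of whose terms lie in this subcategory. -/

open CategoryTheory Limits Pretriangulated

namespace Stmt10

universe u
variable (Λ : Type u) [Ring Λ]

/-- The homotopy category of cochain complexes of `Λ`-modules. -/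
abbrev HtpyCat := HomotopyCategory (ModuleCat.{u} Λ) (ComplexShape.up ℤ)

/-- The subcategory `K^{[-1,0]}(proj Λ)`. -/
def KLam : Set (HtpyCat Λ) :=
  {X | ∃ C : CochainComplex (ModuleCat.{u} Λ) ℤ,
    (∀ i : ℤ, i ≠ -1 → i ≠ 0 → IsZero (C.X i)) ∧
    Module.Projective Λ (C.X (-1)) ∧ Module.Projective Λ (C.X 0) ∧
    Module.Finite Λ (C.X (-1)) ∧ Module.Finite Λ (C.X 0) ∧
    Nonempty (X ≅ (HomotopyCategory.quotient _ _).obj C)}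

/-- Conflations of `K^{[-1,0]}(proj Λ)`. -/
def IsConflation {X Y Z : HtpyCat Λ} (f : X ⟶ Y) (g : Y ⟶ Z) : Prop :=
  X ∈ KLam Λ ∧ Y ∈ KLam Λ ∧ Z ∈ KLam Λ ∧
    ∃ h : Z ⟶ X⟦(1 : ℤ)⟧, Triangle.mk f g h ∈ distTriang (HtpyCat Λ)

/-- `Z` is a direct sum of `A` and `B`. -/
def IsBiprodDecomp (Z A B : HtpyCat Λ) : Prop :=
  ∃ (iA : A ⟶ Z) (iB : B ⟶ Z) (pA : Z ⟶ A) (pB : Z ⟶ B),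
    iA ≫ pA = 𝟙 A ∧ iB ≫ pB = 𝟙 B ∧ iA ≫ pB = 0 ∧ iB ≫ pA = 0 ∧
      pA ≫ iA + pB ≫ iB = 𝟙 Z

/-- `X` is a resolving subcategory of `K^{[-1,0]}(proj Λ)`: it is closed under extensions,
cocones and direct summands, and every object of `K` is the cone of a conflation with middle
term in `X` (equivalently, `X` contains all projective objects). -/
def Resolving (X : Set (HtpyCat Λ)) : Prop :=
  X ⊆ KLam Λ ∧
  (∀ Z ∈ KLam Λ, ∃ (A B : HtpyCat Λ) (f : A ⟶ B) (g : B ⟶ Z),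
    A ∈ KLam Λ ∧ B ∈ X ∧ IsConflation Λ f g) ∧
  (∀ ⦃A B C : HtpyCat Λ⦄ (f : A ⟶ B) (g : B ⟶ C),
    IsConflation Λ f g → A ∈ X → C ∈ X → B ∈ X) ∧
  (∀ ⦃A B C : HtpyCat Λ⦄ (f : A ⟶ B) (g : B ⟶ C),
    IsConflation Λ f g → B ∈ X → C ∈ X → A ∈ X) ∧
  (∀ Z A B : HtpyCat Λ, IsBiprodDecomp Λ Z A B → Z ∈ X → A ∈ X)

/-- `β(X) = { X ∈ X : every conflation X ↣ X' ↠ X'' with X' ∈ X has X'' ∈ X }`. -/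
def beta (X : Set (HtpyCat Λ)) : Set (HtpyCat Λ) :=
  {A | A ∈ X ∧ ∀ ⦃B C : HtpyCat Λ⦄ (f : A ⟶ B) (g : B ⟶ C),
    IsConflation Λ f g → B ∈ X → C ∈ X}

/-! All four closure properties are diagram chases with the octahedral axiom in the homotopy
category, resting on two properties of `K^{[-1,0]}(proj Λ)`. It is closed under extensions, since
the mapping cone of a chain map `L⟦-1⟧ ⟶ K` between two-term complexes of f.g. projectives is
`L ⊞ K` in each degree. It is hereditary, `Hom(E, A⟦n⟧) = 0` for `n ≥ 2`, since then complexes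
representing `E` and `A⟦n⟧` have disjoint supports, so every chain map between them vanishes.
Heredity is what makes `β(X)` closed under cones: given conflations `A ↣ B ↠ C` and
`C ↣ D ↠ E`, the connecting map `C ⟶ A⟦1⟧` extends along `C ⟶ D`, and the cocone `B'` of the
extension sits in conflations `A ↣ B' ↠ D` and `B ↣ B' ↠ E`. -/

section HomotopyCategory

open HomotopyCategory

variable {C : Type*} [Category C] [Preadditive C]

lemma quotient_obj_hom_eq_zero {K L : CochainComplex C ℤ} {a b : ℤ} [K.IsStrictlyGE a]
    [L.IsStrictlyLE b] (hba : b < a)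
    (φ : (quotient C (.up ℤ)).obj K ⟶ (quotient C (.up ℤ)).obj L) : φ = 0 := by
  obtain ⟨φ, rfl⟩ := (quotient C (.up ℤ)).map_surjective φ
  suffices φ = 0 by rw [this, Functor.map_zero]
  ext i
  rcases lt_or_ge i a with hi | hi
  · exact (K.isZero_of_isStrictlyGE a i hi).eq_of_src _ _
  · exact (L.isZero_of_isStrictlyLE b i (by omega)).eq_of_tgt _ _

variable [HasZeroObject C] [HasBinaryBiproducts C]

noncomputable def mappingConeXIsoBiprod {K L : CochainComplex C ℤ} (ψ : L⟦(-1 : ℤ)⟧ ⟶ K)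
    (i : ℤ) : (CochainComplex.mappingCone ψ).X i ≅ L.X i ⊞ K.X i :=
  HomologicalComplex.homotopyCofiber.XIsoBiprod ψ i (i + 1) rfl ≪≫
    biprod.mapIso (L.shiftFunctorObjXIso (-1) (i + 1) i (by omega)) (Iso.refl _)

lemma exists_iso_mappingCone_of_distTriang {T : Triangle (HomotopyCategory C (.up ℤ))}
    (hT : T ∈ distTriang _) {K L : CochainComplex C ℤ}
    (e₁ : T.obj₁ ≅ (quotient C (.up ℤ)).obj K) (e₃ : T.obj₃ ≅ (quotient C (.up ℤ)).obj L) :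
    ∃ ψ : L⟦(-1 : ℤ)⟧ ⟶ K,
      Nonempty (T.obj₂ ≅ (quotient C (.up ℤ)).obj (CochainComplex.mappingCone ψ)) := by
  let e₃' : T.obj₃⟦(-1 : ℤ)⟧ ≅ (quotient C (.up ℤ)).obj (L⟦(-1 : ℤ)⟧) :=
    (shiftFunctor _ (-1 : ℤ)).mapIso e₃ ≪≫
      (((quotient C (.up ℤ)).commShiftIso (-1 : ℤ)).app L).symm
  obtain ⟨ψ, hψ⟩ := (quotient C (.up ℤ)).map_surjective (e₃'.inv ≫ T.invRotate.mor₁ ≫ e₁.hom)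
  have hψT : CochainComplex.mappingCone.triangleh ψ ∈ distTriang _ := ⟨_, _, ψ, ⟨Iso.refl _⟩⟩
  refine ⟨ψ, ⟨Triangle.π₃.mapIso
    (isoTriangleOfIso₁₂ _ _ (inv_rot_of_distTriang T hT) hψT e₃' e₁ ?_)⟩⟩
  exact (e₃'.hom_inv_id_assoc _).symm.trans (congrArg (e₃'.hom ≫ ·) hψ.symm)

end HomotopyCategory

section ModuleCat

universe v

variable {R : Type*} [Ring R] {M N P : ModuleCat.{v} R}

lemma projective_of_iso_biprod (e : M ≅ N ⊞ P) (hN : Module.Projective R N)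
    (hP : Module.Projective R P) : Module.Projective R M :=
  .of_equiv (e ≪≫ ModuleCat.biprodIsoProd N P).toLinearEquiv.symm

lemma finite_of_iso_biprod (e : M ≅ N ⊞ P) (hN : Module.Finite R N) (hP : Module.Finite R P) :
    Module.Finite R M :=
  .equiv (e ≪≫ ModuleCat.biprodIsoProd N P).toLinearEquiv.symm

end ModuleCat

variable {Λ}

lemma mem_KLam_of_iso {A B : HtpyCat Λ} (e : A ≅ B) (hB : B ∈ KLam Λ) : A ∈ KLam Λ := by
  obtain ⟨K, hK, hK₁, hK₂, hK₃, hK₄, ⟨e'⟩⟩ := hB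
  exact ⟨K, hK, hK₁, hK₂, hK₃, hK₄, ⟨e ≪≫ e'⟩⟩

lemma mem_KLam_of_distTriang {T : Triangle (HtpyCat Λ)} (hT : T ∈ distTriang _)
    (h₁ : T.obj₁ ∈ KLam Λ) (h₃ : T.obj₃ ∈ KLam Λ) : T.obj₂ ∈ KLam Λ := by
  obtain ⟨K, hK, hKp, hKp', hKf, hKf', ⟨e₁⟩⟩ := h₁
  obtain ⟨L, hL, hLp, hLp', hLf, hLf', ⟨e₃⟩⟩ := h₃
  obtain ⟨ψ, ⟨e⟩⟩ := exists_iso_mappingCone_of_distTriang hT e₁ e₃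
  refine ⟨_, fun i hi hi' => ?_, projective_of_iso_biprod (mappingConeXIsoBiprod ψ _) hLp hKp,
    projective_of_iso_biprod (mappingConeXIsoBiprod ψ _) hLp' hKp',
    finite_of_iso_biprod (mappingConeXIsoBiprod ψ _) hLf hKf,
    finite_of_iso_biprod (mappingConeXIsoBiprod ψ _) hLf' hKf', ⟨e⟩⟩
  exact ((biprod_isZero_iff _ _).2 ⟨hL i hi hi', hK i hi hi'⟩).of_iso (mappingConeXIsoBiprod ψ i)

lemma exists_iso_quotient_obj_of_mem_KLam {A : HtpyCat Λ} (hA : A ∈ KLam Λ) :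
    ∃ (K : CochainComplex (ModuleCat.{u} Λ) ℤ) (_ : K.IsStrictlyGE (-1)) (_ : K.IsStrictlyLE 0),
      Nonempty (A ≅ (HomotopyCategory.quotient _ _).obj K) := by
  obtain ⟨K, hK, -, -, -, -, e⟩ := hA
  exact ⟨K, (K.isStrictlyGE_iff _).2 fun i hi => hK i (by omega) (by omega),
    (K.isStrictlyLE_iff _).2 fun i hi => hK i (by omega) (by omega), e⟩

lemma hom_shift_eq_zero_of_mem_KLam {E A : HtpyCat Λ} (hE : E ∈ KLam Λ) (hA : A ∈ KLam Λ)
    {m n : ℤ} (hmn : m + 1 < n) (φ : E⟦m⟧ ⟶ A⟦n⟧) : φ = 0 := by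
  obtain ⟨K, _, _, ⟨eE⟩⟩ := exists_iso_quotient_obj_of_mem_KLam hE
  obtain ⟨L, _, _, ⟨eA⟩⟩ := exists_iso_quotient_obj_of_mem_KLam hA
  let Q := HomotopyCategory.quotient (ModuleCat.{u} Λ) (.up ℤ)
  let eE' : E⟦m⟧ ≅ Q.obj (K⟦m⟧) :=
    (shiftFunctor _ m).mapIso eE ≪≫ ((Q.commShiftIso m).app K).symm
  let eA' : A⟦n⟧ ≅ Q.obj (L⟦n⟧) :=
    (shiftFunctor _ n).mapIso eA ≪≫ ((Q.commShiftIso n).app L).symm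
  have := K.isStrictlyGE_shift (-1) m (-1 - m) (by omega)
  have := L.isStrictlyLE_shift 0 n (-n) (by omega)
  have h : eE'.inv ≫ φ ≫ eA'.hom = 0 :=
    quotient_obj_hom_eq_zero (a := -1 - m) (b := -n) (by omega) _
  simpa using congrArg (fun ψ => eE'.hom ≫ ψ ≫ eA'.inv) h

lemma IsBiprodDecomp.symm {Z A B : HtpyCat Λ} (d : IsBiprodDecomp Λ Z A B) :
    IsBiprodDecomp Λ Z B A := by
  obtain ⟨iA, iB, pA, pB, h₁, h₂, h₃, h₄, h₅⟩ := d
  exact ⟨iB, iA, pB, pA, h₂, h₁, h₄, h₃, by rw [add_comm, h₅]⟩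

lemma IsBiprodDecomp.nonempty_iso {Z A B : HtpyCat Λ} (d : IsBiprodDecomp Λ Z A B) :
    Nonempty (Z ≅ A ⊞ B) := by
  obtain ⟨iA, iB, pA, pB, h₁, h₂, h₃, h₄, h₅⟩ := d
  refine ⟨⟨biprod.lift pA pB, biprod.desc iA iB, by rw [biprod.lift_desc, h₅], ?_⟩⟩
  ext <;> simp [h₁, h₂, h₃, h₄]

open ZeroObject in
lemma Resolving.mem_of_iso {X : Set (HtpyCat Λ)} (hX : Resolving Λ X) {A A' : HtpyCat Λ}
    (e : A ≅ A') (hA : A ∈ X) : A' ∈ X :=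
  hX.2.2.2.2 A A' 0 ⟨e.inv, 0, e.hom, 0, by simp, (isZero_zero _).eq_of_src _ _, by simp,
    by simp, by simp⟩ hA

lemma mem_beta_of_iso {X : Set (HtpyCat Λ)} (hX : Resolving Λ X) {A A' : HtpyCat Λ}
    (e : A ≅ A') (hA : A ∈ beta Λ X) : A' ∈ beta Λ X := by
  refine ⟨hX.mem_of_iso e hA.1, fun B C f g hfg hB => hA.2 (e.hom ≫ f) g ?_ hB⟩
  obtain ⟨hA', hBK, hCK, h, hT⟩ := hfg
  refine ⟨mem_KLam_of_iso e hA', hBK, hCK, h ≫ e.inv⟦(1 : ℤ)⟧',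
    isomorphic_distinguished _ hT _ ?_⟩
  exact Triangle.isoMk _ _ e (Iso.refl _) (Iso.refl _) (by simp [Triangle.mk])
    (by simp [Triangle.mk]) (by simp [Triangle.mk, ← Functor.map_comp])

lemma mem_beta_of_summand {X : Set (HtpyCat Λ)} (hX : Resolving Λ X) {Z : HtpyCat Λ}
    (hZ : Z ∈ beta Λ X) {A B : HtpyCat Λ} (d : IsBiprodDecomp Λ Z A B) : A ∈ beta Λ X := by
  have hB : B ∈ X := hX.2.2.2.2 Z B A d.symm hZ.1
  refine ⟨hX.2.2.2.2 Z A B d hZ.1, fun D E u v huv hD => ?_⟩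
  obtain ⟨-, hDK, hEK, δ, hT⟩ := huv
  obtain ⟨e⟩ := d.symm.nonempty_iso
  have hBA : (B ⊞ A : HtpyCat Λ) ∈ beta Λ X := mem_beta_of_iso hX e hZ
  have hBD := binaryBiproductTriangle_distinguished B D
  have hBDK : (B ⊞ D : HtpyCat Λ) ∈ KLam Λ := mem_KLam_of_distTriang hBD (hX.1 hB) hDK
  have hBDX : (B ⊞ D : HtpyCat Λ) ∈ X := hX.2.2.1 _ _ ⟨hX.1 hB, hBDK, hDK, _, hBD⟩ hB hD
  -- The octahedron on `B ⟶ B ⊞ A ⟶ B ⊞ D` identifies the cone `W` of `𝟙 B ⊞ u` with `E`.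
  obtain ⟨W, r, w, hW⟩ := distinguished_cocone_triangle (biprod.map (𝟙 B) u)
  have O := Triangulated.someOctahedron (by simp) (binaryBiproductTriangle_distinguished B A) hW
    hBD
  have hm : O.m₁ = u := by simpa using congrArg (biprod.inr ≫ ·) O.comm₁
  let eW : E ≅ W := Triangle.π₃.mapIso
    (isoTriangleOfIso₁₂ _ _ hT O.mem (Iso.refl _) (Iso.refl _) (by simp [Triangle.mk, hm]))
  have hWK : W ∈ KLam Λ := mem_KLam_of_iso eW.symm hEK
  exact hX.mem_of_iso eW.symm (hBA.2 _ r ⟨hX.1 hBA.1, hBDK, hWK, w, hW⟩ hBDX)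

lemma mem_beta_of_extension {X : Set (HtpyCat Λ)} (hX : Resolving Λ X)
    ⦃A B C : HtpyCat Λ⦄ (f : A ⟶ B) (g : B ⟶ C) (hfg : IsConflation Λ f g)
    (hA : A ∈ beta Λ X) (hC : C ∈ beta Λ X) : B ∈ beta Λ X := by
  refine ⟨hX.2.2.1 f g hfg hA.1 hC.1, fun D E u v huv hD => ?_⟩
  obtain ⟨hAK, -, hCK, δ, hT⟩ := hfg
  obtain ⟨-, hDK, hEK, δ', hT'⟩ := huv
  obtain ⟨W, v₁₃, w₁₃, h₁₃⟩ := distinguished_cocone_triangle (f ≫ u)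
  have O := Triangulated.someOctahedron rfl hT hT' h₁₃
  have hWK : W ∈ KLam Λ := mem_KLam_of_distTriang O.mem hCK hEK
  have hWX : W ∈ X := hA.2 (f ≫ u) v₁₃ ⟨hAK, hDK, hWK, w₁₃, h₁₃⟩ hD
  exact hC.2 O.m₁ O.m₃ ⟨hCK, hWK, hEK, _, O.mem⟩ hWX

lemma mem_beta_of_cone {X : Set (HtpyCat Λ)} (hX : Resolving Λ X)
    ⦃A B C : HtpyCat Λ⦄ (f : A ⟶ B) (g : B ⟶ C) (hfg : IsConflation Λ f g)
    (hA : A ∈ beta Λ X) (hB : B ∈ beta Λ X) : C ∈ beta Λ X := by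
  refine ⟨hA.2 f g hfg hB.1, fun D E u v huv hD => ?_⟩
  obtain ⟨hAK, hBK, -, δ, hT⟩ := hfg
  obtain ⟨-, hDK, hEK, δ', hT'⟩ := huv
  obtain ⟨ε, hε⟩ := Triangle.yoneda_exact₂ _ (inv_rot_of_distTriang _ hT') δ
    (hom_shift_eq_zero_of_mem_KLam hEK hAK (by norm_num) _)
  obtain ⟨B', f', g', hB'⟩ := distinguished_cocone_triangle₂ ε
  have hB'K : B' ∈ KLam Λ := mem_KLam_of_distTriang hB' hAK hDK
  have hB'X : B' ∈ X := hX.2.2.1 f' g' ⟨hAK, hB'K, hDK, _, hB'⟩ hA.1 hD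
  have O := Triangulated.someOctahedron' hε.symm (inv_rot_of_distTriang _ hT')
    (rot_of_distTriang _ hB') (rot_of_distTriang _ hT)
  have eE := (shiftEquiv (HtpyCat Λ) (1 : ℤ)).counitIso.app E
  have hE'K : E⟦(-1 : ℤ)⟧⟦(1 : ℤ)⟧ ∈ KLam Λ := mem_KLam_of_iso eE hEK
  exact hX.mem_of_iso eE (hB.2 _ _ ⟨hBK, hB'K, hE'K, _, rot_of_distTriang _ O.mem⟩ hB'X)

lemma mem_beta_of_cocone {X : Set (HtpyCat Λ)} (hX : Resolving Λ X)
    ⦃A B C : HtpyCat Λ⦄ (f : A ⟶ B) (g : B ⟶ C) (hfg : IsConflation Λ f g)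
    (hB : B ∈ beta Λ X) (hC : C ∈ beta Λ X) : A ∈ beta Λ X := by
  refine ⟨hX.2.2.2.1 f g hfg hB.1 hC.1, fun D E u v huv hD => ?_⟩
  obtain ⟨-, hBK, hCK, δ, hT⟩ := hfg
  obtain ⟨-, hDK, hEK, δ', hT'⟩ := huv
  obtain ⟨W, v₁₃, w₁₃, h₁₃⟩ :=
    distinguished_cocone_triangle ((Triangle.mk u v δ').invRotate.mor₁ ≫ f)
  have O := Triangulated.someOctahedron rfl (inv_rot_of_distTriang _ hT') hT h₁₃
  have hWK : W ∈ KLam Λ := mem_KLam_of_distTriang O.mem hDK hCK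
  have hWX : W ∈ X := hX.2.2.1 O.m₁ O.m₃ ⟨hDK, hWK, hCK, _, O.mem⟩ hD hC.1
  have eE := (shiftEquiv (HtpyCat Λ) (1 : ℤ)).counitIso.app E
  have hE'K : E⟦(-1 : ℤ)⟧⟦(1 : ℤ)⟧ ∈ KLam Λ := mem_KLam_of_iso eE hEK
  exact hX.mem_of_iso eE (hB.2 v₁₃ w₁₃ ⟨hBK, hWK, hE'K, _, rot_of_distTriang _ h₁₃⟩ hWX)

variable (Λ)

/-- If `X` is a resolving subcategory of `K^{[-1,0]}(proj Λ)`, then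
`β(X)` is a thick subcategory: it is closed under direct summands, extensions, cones and
cocones of conflations. -/
theorem stmt10 (X : Set (HtpyCat Λ)) (hX : Resolving Λ X) :
    (∀ Z ∈ beta Λ X, ∀ A B : HtpyCat Λ, IsBiprodDecomp Λ Z A B → A ∈ beta Λ X) ∧
    (∀ ⦃A B C : HtpyCat Λ⦄ (f : A ⟶ B) (g : B ⟶ C), IsConflation Λ f g →
      A ∈ beta Λ X → C ∈ beta Λ X → B ∈ beta Λ X) ∧
    (∀ ⦃A B C : HtpyCat Λ⦄ (f : A ⟶ B) (g : B ⟶ C), IsConflation Λ f g →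
      A ∈ beta Λ X → B ∈ beta Λ X → C ∈ beta Λ X) ∧
    (∀ ⦃A B C : HtpyCat Λ⦄ (f : A ⟶ B) (g : B ⟶ C), IsConflation Λ f g →
      B ∈ beta Λ X → C ∈ beta Λ X → A ∈ beta Λ X) :=
  ⟨fun _ hZ _ _ d => mem_beta_of_summand hX hZ d, mem_beta_of_extension hX, mem_beta_of_cone hX,
    mem_beta_of_cocone hX⟩

end Stmt10
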